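/- arXiv:math/0503594 — 2 statements merged into one kernel-verified Lean document; each statement's English description precedes it below -/
import Mathlib

section
/- Let ξ be the Hopf vector field on the unit sphere S^{2m+1}. For orthonormal tangent vectors X, Y, the sectional curvature of ξ(S^{2m+1}) ⊂ T₁S^{2m+1} along the plane spanned by the ξ-tangential lifts X^τ, Y^τ equals (1 - (3/4)(⟨ξ,X⟩² + ⟨ξ,Y⟩²) + (3/2)⟨A_ξ X, Y⟩²) / (2 - ⟨ξ,X⟩² - ⟨ξ,Y⟩²). -/
open scoped RealInnerProductSpace

private lemma div_aux (p n q d : ℝ) (h1 : p = 2 * n) (h2 : q = 2 * d) : p / q = n / d := by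
  rw [h1, h2, mul_div_mul_left n d two_ne_zero]

/-- Sectional curvature of the Hopf vector field submanifold
`ξ(S^{2m+1}) ⊂ T₁S^{2m+1}`: for orthonormal tangent vectors `X, Y` the sectional
curvature along the plane of the ξ-tangential lifts `X^τ, Y^τ` — given by the
Boeckx–Vanhecke curvature formula for `T₁M` of a space of constant curvature 1
(with `R(U,W)Z = ⟨W,Z⟩U - ⟨U,Z⟩W`, `∇R = 0`) applied to `X₁ = X`, `X₂ = A X`,
`Y₁ = Y`, `Y₂ = A Y`, divided by the squared bivector norm
`4 - 2⟨ξ,X⟩² - 2⟨ξ,Y⟩²` — equals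
`(1 - (3/4)(⟨ξ,X⟩² + ⟨ξ,Y⟩²) + (3/2)⟨A X, Y⟩²) / (2 - ⟨ξ,X⟩² - ⟨ξ,Y⟩²)`. -/
theorem stmt16 {V : Type*} [NormedAddCommGroup V] [InnerProductSpace ℝ V]
    (ξ : V) (hξ : ‖ξ‖ = 1) (A : V →ₗ[ℝ] V)
    (hAξ : A ξ = 0) (hskew : ∀ X Y : V, ⟪A X, Y⟫ = -⟪X, A Y⟫)
    (hsq : ∀ X : V, ⟪X, ξ⟫ = 0 → A (A X) = -X)
    (X Y : V) (hX : ‖X‖ = 1) (hY : ‖Y‖ = 1) (hXY : ⟪X, Y⟫ = 0) :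
    let R : V → V → V → V := fun U W Z => ⟪W, Z⟫ • U - ⟪U, Z⟫ • W
    (⟪R X Y Y, X⟫ - (3 / 4) * ‖R X Y ξ‖ ^ 2 +
        (1 / 4) * ‖R ξ (A Y) X + R ξ (A X) Y‖ ^ 2 +
        ‖A X‖ ^ 2 * ‖A Y‖ ^ 2 - ⟪A X, A Y⟫ ^ 2 +
        3 * ⟪R X Y (A Y), A X⟫ - ⟪R ξ (A X) X, R ξ (A Y) Y⟫) /
      (4 - 2 * ⟪ξ, X⟫ ^ 2 - 2 * ⟪ξ, Y⟫ ^ 2) =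
    (1 - (3 / 4) * (⟪ξ, X⟫ ^ 2 + ⟪ξ, Y⟫ ^ 2) + (3 / 2) * ⟪A X, Y⟫ ^ 2) /
      (2 - ⟪ξ, X⟫ ^ 2 - ⟪ξ, Y⟫ ^ 2) := by
  intro R
  have hξξ : ⟪ξ, ξ⟫ = 1 := by
    rw [real_inner_self_eq_norm_sq, hξ]; norm_num
  have hXX : ⟪X, X⟫ = 1 := by rw [real_inner_self_eq_norm_sq, hX]; norm_num
  have hYY : ⟪Y, Y⟫ = 1 := by rw [real_inner_self_eq_norm_sq, hY]; norm_num
  set a := ⟪ξ, X⟫ with ha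
  set b := ⟪ξ, Y⟫ with hb
  set c := ⟪A X, Y⟫ with hc
  have hXξ : ⟪X, ξ⟫ = a := real_inner_comm ξ X
  have hYξ : ⟪Y, ξ⟫ = b := real_inner_comm ξ Y
  have hYX : ⟪Y, X⟫ = 0 := by rw [real_inner_comm]; exact hXY
  have hXAX : ⟪X, A X⟫ = 0 := by
    have h := hskew X X
    rw [real_inner_comm X (A X)] at h
    linarith
  have hYAY : ⟪Y, A Y⟫ = 0 := by
    have h := hskew Y Y
    rw [real_inner_comm Y (A Y)] at h
    linarith
  have hAXX : ⟪A X, X⟫ = 0 := by rw [real_inner_comm]; exact hXAX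
  have hAYY : ⟪A Y, Y⟫ = 0 := by rw [real_inner_comm]; exact hYAY
  have hXAY : ⟪X, A Y⟫ = -c := by have := hskew X Y; linarith
  have hAYX : ⟪A Y, X⟫ = -c := by rw [real_inner_comm]; exact hXAY
  have hYAX : ⟪Y, A X⟫ = c := by rw [real_inner_comm]
  have hξAX : ⟪ξ, A X⟫ = 0 := by
    have h := hskew ξ X
    rw [hAξ, inner_zero_left] at h
    linarith
  have hξAY : ⟪ξ, A Y⟫ = 0 := by
    have h := hskew ξ Y
    rw [hAξ, inner_zero_left] at h
    linarith
  have hAXξ : ⟪A X, ξ⟫ = 0 := by rw [real_inner_comm]; exact hξAX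
  have hAYξ : ⟪A Y, ξ⟫ = 0 := by rw [real_inner_comm]; exact hξAY
  have hAAX : A (A X) = a • ξ - X := by
    have h0 : ⟪X - a • ξ, ξ⟫ = 0 := by
      rw [inner_sub_left, real_inner_smul_left, hXξ, hξξ]; ring
    have h := hsq (X - a • ξ) h0
    rw [map_sub, map_smul, hAξ, smul_zero, sub_zero] at h
    rw [h]; abel
  have hAAY : A (A Y) = b • ξ - Y := by
    have h0 : ⟪Y - b • ξ, ξ⟫ = 0 := by
      rw [inner_sub_left, real_inner_smul_left, hYξ, hξξ]; ring
    have h := hsq (Y - b • ξ) h0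
    rw [map_sub, map_smul, hAξ, smul_zero, sub_zero] at h
    rw [h]; abel
  have hAXAX : ⟪A X, A X⟫ = 1 - a ^ 2 := by
    have h := hskew X (A X)
    rw [h, hAAX, inner_sub_right, real_inner_smul_right, hXξ, hXX]; ring
  have hAYAY : ⟪A Y, A Y⟫ = 1 - b ^ 2 := by
    have h := hskew Y (A Y)
    rw [h, hAAY, inner_sub_right, real_inner_smul_right, hYξ, hYY]; ring
  have hAXAY : ⟪A X, A Y⟫ = -(a * b) := by
    have h := hskew X (A Y)
    rw [h, hAAY, inner_sub_right, real_inner_smul_right, hXξ, hXY]; ring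
  have hAYAX : ⟪A Y, A X⟫ = -(a * b) := by
    rw [real_inner_comm]; exact hAXAY
  have hnAX : ‖A X‖ ^ 2 = 1 - a ^ 2 := by
    rw [← real_inner_self_eq_norm_sq]; exact hAXAX
  have hnAY : ‖A Y‖ ^ 2 = 1 - b ^ 2 := by
    rw [← real_inner_self_eq_norm_sq]; exact hAYAY
  simp only [R]
  rw [← real_inner_self_eq_norm_sq, ← real_inner_self_eq_norm_sq, hnAX, hnAY]
  simp only [inner_sub_left, inner_sub_right, inner_add_left, inner_add_right,
    real_inner_smul_left, real_inner_smul_right,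
    hξξ, hXX, hYY, hXξ, hYξ, hXY, hYX, hXAX, hYAY, hAXX, hAYY, hXAY, hAYX, hYAX,
    hξAX, hξAY, hAXξ, hAYξ, hAXAX, hAYAY, hAXAY, hAYAX, ← hc, ← ha, ← hb]
  exact div_aux _ _ _ _ (by ring) (by ring)
end

section
/- The function f(a, b, c) = (1 - (3/4)(a + b) + (3/2)c) / (2 - a - b) on the domain {0 ≤ a, 0 ≤ b, a + b ≤ 1, 0 ≤ c ≤ 1 - a - b} attains values only in the interval [1/4, 5/4]; the minimum 1/4 is attained when a + b = 1 (forcing c = 0) and the maximum 5/4 when a = b = 0, c = 1. -/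
/-- The function `f(a,b,c) = (1 - (3/4)(a+b) + (3/2)c) / (2 - a - b)` on the
domain `{0 ≤ a, 0 ≤ b, a + b ≤ 1, 0 ≤ c ≤ 1 - a - b}` takes values only in
`[1/4, 5/4]`; the minimum `1/4` is attained exactly when `a + b = 1` (which
forces `c = 0`), and the maximum `5/4` is attained at `a = b = 0`, `c = 1`. -/
theorem stmt17 :
    let f : ℝ → ℝ → ℝ → ℝ := fun a b c => (1 - (3 / 4) * (a + b) + (3 / 2) * c) / (2 - a - b)
    (∀ a b c : ℝ, 0 ≤ a → 0 ≤ b → a + b ≤ 1 → 0 ≤ c → c ≤ 1 - a - b →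
      f a b c ∈ Set.Icc (1 / 4 : ℝ) (5 / 4)) ∧
    (∀ a b c : ℝ, 0 ≤ a → 0 ≤ b → a + b ≤ 1 → 0 ≤ c → c ≤ 1 - a - b →
      a + b = 1 → c = 0 ∧ f a b c = 1 / 4) ∧
    f 0 0 1 = 5 / 4 := by
  intro f
  have hbounds : ∀ a b c : ℝ, 0 ≤ a → 0 ≤ b → a + b ≤ 1 → 0 ≤ c → c ≤ 1 - a - b →
      f a b c ∈ Set.Icc (1 / 4 : ℝ) (5 / 4) := by
    intro a b c ha hb hab hc hc'
    have hd : (0:ℝ) < 2 - a - b := by linarith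
    constructor
    · rw [le_div_iff₀ hd]; nlinarith
    · rw [div_le_iff₀ hd]; nlinarith
  refine ⟨hbounds, ?_, by norm_num [f]⟩
  intro a b c ha hb hab hc hc' heq
  have hc0 : c = 0 := by linarith
  refine ⟨hc0, ?_⟩
  have h2 : 2 - a - b = 1 := by linarith
  simp only [f, hc0, h2]
  have h3 : 3 / 4 * (a + b) = 3/4 := by rw [heq]; norm_num
  rw [h3]; norm_num
end
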